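/- (Monotonicity of unnormalized empirical Rademacher complexity) If S_n is a subsample of size n of a sample S_m of size m (n ≤ m, S_m obtained by appending m−n points to S_n), then n·R̂_{S_n}(F) ≤ m·R̂_{S_m}(F). -/
import Mathlib


open scoped BigOperators Pointwise

/-- Sign of a Rademacher variable encoded as a Boolean. -/
noncomputable def rsign (b : Bool) : ℝ := if b then 1 else -1

/-- Empirical Rademacher complexity of a family `F` with respect to a sample. -/
noncomputable def empRad {X : Type*} (F : Set (X → ℝ)) (m : ℕ) (x : Fin m → X) : ℝ :=
  (∑ η : Fin m → Bool,
    sSup {r : ℝ | ∃ f ∈ F, r = (1 / (m : ℝ)) * ∑ i, rsign (η i) * f (x i)}) / 2 ^ m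

/-- Unnormalized empirical Rademacher complexity. -/
noncomputable def gUn {X : Type*} (F : Set (X → ℝ)) (k : ℕ) (x : Fin k → X) : ℝ :=
  (∑ η : Fin k → Bool,
    sSup {r : ℝ | ∃ f ∈ F, r = ∑ i, rsign (η i) * f (x i)}) / 2 ^ k

lemma abs_rsign (b : Bool) : |rsign b| = 1 := by
  cases b <;> simp [rsign]

lemma sum_bound {X : Type*} {F : Set (X → ℝ)} {C : ℝ}
    (hbdd : ∀ f ∈ F, ∀ x : X, |f x| ≤ C) {k : ℕ} (x : Fin k → X) (η : Fin k → Bool)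
    {f : X → ℝ} (hf : f ∈ F) :
    ∑ i, rsign (η i) * f (x i) ≤ (k : ℝ) * C := by
  calc ∑ i, rsign (η i) * f (x i) ≤ ∑ i : Fin k, C := by
        apply Finset.sum_le_sum
        intro i _
        calc rsign (η i) * f (x i) ≤ |rsign (η i) * f (x i)| := le_abs_self _
          _ = |f (x i)| := by rw [abs_mul, abs_rsign, one_mul]
          _ ≤ C := hbdd f hf (x i)
    _ = (k : ℝ) * C := by simp [mul_comm]

lemma bddAbove_set {X : Type*} {F : Set (X → ℝ)} {C : ℝ}
    (hbdd : ∀ f ∈ F, ∀ x : X, |f x| ≤ C) {k : ℕ} (x : Fin k → X) (η : Fin k → Bool) :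
    BddAbove {r : ℝ | ∃ f ∈ F, r = ∑ i, rsign (η i) * f (x i)} := by
  refine ⟨(k : ℝ) * C, ?_⟩
  rintro r ⟨f, hf, rfl⟩
  exact sum_bound hbdd x η hf

lemma nonempty_set {X : Type*} {F : Set (X → ℝ)} (hF : F.Nonempty)
    {k : ℕ} (x : Fin k → X) (η : Fin k → Bool) :
    {r : ℝ | ∃ f ∈ F, r = ∑ i, rsign (η i) * f (x i)}.Nonempty := by
  obtain ⟨f, hf⟩ := hF
  exact ⟨_, f, hf, rfl⟩

/-- One-step monotonicity. -/
lemma gUn_step {X : Type*} (F : Set (X → ℝ)) (hF : F.Nonempty)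
    (C : ℝ) (hbdd : ∀ f ∈ F, ∀ x : X, |f x| ≤ C)
    (k : ℕ) (y : Fin (k + 1) → X) :
    gUn F k (fun i => y i.castSucc) ≤ gUn F (k + 1) y := by
  unfold gUn
  rw [div_le_div_iff₀ (by positivity) (by positivity)]
  have hsum : ∑ η : Fin (k + 1) → Bool,
      sSup {r : ℝ | ∃ f ∈ F, r = ∑ i, rsign (η i) * f (y i)} =
      ∑ p : Bool × (Fin k → Bool),
      sSup {r : ℝ | ∃ f ∈ F, r = ∑ i, rsign ((Fin.snocEquiv (fun _ => Bool)) p i) * f (y i)} := by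
    exact (Fintype.sum_equiv (Fin.snocEquiv (fun _ => Bool)) _ _ (fun p => rfl)).symm
  rw [hsum, Fintype.sum_prod_type, Finset.sum_comm]
  have hcalc : ∀ A B : ℝ, 2 * A ≤ B → A * 2 ^ (k+1) ≤ B * 2 ^ k := by
    intro A B hAB
    have h2 : (0:ℝ) < 2 ^ k := by positivity
    calc A * 2 ^ (k+1) = (2 * A) * 2 ^ k := by ring
      _ ≤ B * 2 ^ k := mul_le_mul_of_nonneg_right hAB h2.le
  apply hcalc
  rw [Finset.mul_sum]
  apply Finset.sum_le_sum
  intro η _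
  -- goal: 2 * sSup S ≤ ∑ b : Bool, sSup (S + rsign b * f (y last))
  rw [Fintype.sum_bool]
  have hsnoc : ∀ (b : Bool) (f : X → ℝ),
      ∑ i, rsign ((Fin.snocEquiv (fun _ => Bool)) (b, η) i) * f (y i) =
      (∑ i : Fin k, rsign (η i) * f (y i.castSucc)) + rsign b * f (y (Fin.last k)) := by
    intro b f
    rw [Fin.sum_univ_castSucc]
    simp [Fin.snocEquiv]
  have key : ∀ r ∈ {r : ℝ | ∃ f ∈ F, r = ∑ i, rsign (η i) * f (y i.castSucc)},
      2 * r ≤ sSup {r : ℝ | ∃ f ∈ F, r = ∑ i,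
          rsign ((Fin.snocEquiv (fun _ => Bool)) (true, η) i) * f (y i)} +
        sSup {r : ℝ | ∃ f ∈ F, r = ∑ i,
          rsign ((Fin.snocEquiv (fun _ => Bool)) (false, η) i) * f (y i)} := by
    rintro r ⟨f, hf, rfl⟩
    have h1 : (∑ i : Fin k, rsign (η i) * f (y i.castSucc)) + rsign true * f (y (Fin.last k)) ≤
        sSup {r : ℝ | ∃ f ∈ F, r = ∑ i,
          rsign ((Fin.snocEquiv (fun _ => Bool)) (true, η) i) * f (y i)} := by
      apply le_csSup (bddAbove_set hbdd y _)
      exact ⟨f, hf, (hsnoc true f).symm⟩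
    have h2 : (∑ i : Fin k, rsign (η i) * f (y i.castSucc)) + rsign false * f (y (Fin.last k)) ≤
        sSup {r : ℝ | ∃ f ∈ F, r = ∑ i,
          rsign ((Fin.snocEquiv (fun _ => Bool)) (false, η) i) * f (y i)} := by
      apply le_csSup (bddAbove_set hbdd y _)
      exact ⟨f, hf, (hsnoc false f).symm⟩
    have := add_le_add h1 h2
    simp only [rsign, if_true, if_false, Bool.false_eq_true] at this ⊢
    linarith
  have hne := nonempty_set hF (fun i : Fin k => y i.castSucc) η
  calc 2 * sSup {r : ℝ | ∃ f ∈ F, r = ∑ i, rsign (η i) * f (y i.castSucc)} =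
      sSup {r : ℝ | ∃ f ∈ F, r = ∑ i, rsign (η i) * f (y i.castSucc)} * 2 := by ring
    _ ≤ _ := by
        rw [← le_div_iff₀ (by norm_num : (0:ℝ) < 2)]
        apply csSup_le hne
        intro r hr
        have := key r hr
        linarith

lemma gUn_mono {X : Type*} (F : Set (X → ℝ)) (hF : F.Nonempty)
    (C : ℝ) (hbdd : ∀ f ∈ F, ∀ x : X, |f x| ≤ C) :
    ∀ (m n : ℕ) (h : n ≤ m) (x : Fin m → X),
      gUn F n (fun j => x (Fin.castLE h j)) ≤ gUn F m x := by
  intro m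
  induction m with
  | zero => intro n h x; interval_cases n; exact le_of_eq (by congr)
  | succ m ih =>
    intro n h x
    rcases Nat.lt_or_ge n (m + 1) with h' | h'
    · have hnm : n ≤ m := Nat.lt_succ_iff.mp h'
      have step := gUn_step F hF C hbdd m x
      have := ih n hnm (fun i => x i.castSucc)
      have heq : (fun j : Fin n => x (Fin.castLE h j)) =
          (fun j : Fin n => (fun i : Fin m => x i.castSucc) (Fin.castLE hnm j)) := by
        funext j; rfl
      rw [heq]
      exact le_trans this step
    · have hnm : n = m + 1 := le_antisymm h h'
      subst hnm
      exact le_of_eq (by congr)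

lemma mul_empRad_eq_gUn {X : Type*} (F : Set (X → ℝ)) (hF : F.Nonempty)
    (C : ℝ) (hbdd : ∀ f ∈ F, ∀ x : X, |f x| ≤ C)
    (k : ℕ) (x : Fin k → X) :
    (k : ℝ) * empRad F k x = gUn F k x := by
  unfold empRad gUn
  rw [← mul_div_assoc]
  congr 1
  rw [Finset.mul_sum]
  apply Finset.sum_congr rfl
  intro η _
  rcases Nat.eq_zero_or_pos k with hk | hk
  · subst hk
    have h1 : {r : ℝ | ∃ f ∈ F, r = (1 / ((0:ℕ) : ℝ)) * ∑ i : Fin 0, rsign (η i) * f (x i)}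
        = {(0:ℝ)} := by
      ext r
      simp only [Set.mem_setOf_eq, Set.mem_singleton_iff]
      constructor
      · rintro ⟨f, hf, rfl⟩; simp
      · rintro rfl; exact ⟨hF.choose, hF.choose_spec, by simp⟩
    have h2 : {r : ℝ | ∃ f ∈ F, r = ∑ i : Fin 0, rsign (η i) * f (x i)} = {(0:ℝ)} := by
      ext r
      simp only [Set.mem_setOf_eq, Set.mem_singleton_iff]
      constructor
      · rintro ⟨f, hf, rfl⟩; simp
      · rintro rfl; exact ⟨hF.choose, hF.choose_spec, by simp⟩
    rw [h1, h2]
    simp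
  · have hk' : (0:ℝ) < (k : ℝ) := by exact_mod_cast hk
    have hset : {r : ℝ | ∃ f ∈ F, r = (1 / (k : ℝ)) * ∑ i, rsign (η i) * f (x i)}
        = (1 / (k : ℝ)) • {r : ℝ | ∃ f ∈ F, r = ∑ i, rsign (η i) * f (x i)} := by
      ext r
      simp only [Set.mem_smul_set, Set.mem_setOf_eq, smul_eq_mul]
      constructor
      · rintro ⟨f, hf, rfl⟩; exact ⟨_, ⟨f, hf, rfl⟩, rfl⟩
      · rintro ⟨s, ⟨f, hf, rfl⟩, rfl⟩; exact ⟨f, hf, rfl⟩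
    rw [hset, Real.sSup_smul_of_nonneg (by positivity), smul_eq_mul, ← mul_assoc]
    rw [mul_one_div, div_self (ne_of_gt hk'), one_mul]

/-- Monotonicity of the unnormalized empirical Rademacher complexity: if
`S_n` consists of the first `n` points of the sample `S_m` of size `m ≥ n`,
then `n · R̂_{S_n}(F) ≤ m · R̂_{S_m}(F)`. -/
theorem empRad_unnormalized_mono {X : Type*} (F : Set (X → ℝ)) (hF : F.Nonempty)
    (C : ℝ) (hbdd : ∀ f ∈ F, ∀ x : X, |f x| ≤ C)
    (n m : ℕ) (hnm : n ≤ m) (x : Fin m → X) :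
    (n : ℝ) * empRad F n (fun j => x (Fin.castLE hnm j)) ≤ (m : ℝ) * empRad F m x := by
  rw [mul_empRad_eq_gUn F hF C hbdd, mul_empRad_eq_gUn F hF C hbdd]
  exact gUn_mono F hF C hbdd m n hnm x
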